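/- arXiv:2412.20401 — 2 statements merged into one kernel-verified Lean document; each statement's English description precedes it below -/
import Mathlib

section
/- For any ω-poset P and elements p, q ∈ P: p ⊲ q (p is star-below q) if and only if the closed set {S ∈ SP : S ⊆ p^∧} is contained in the open set q_S = {S ∈ SP : q ∈ S}. -/
namespace OP

section OmegaPoset

variable (P : Type*) [PartialOrder P]

/-- The n-th cone of the poset: `cone 0` is the set of maximal elements. -/
def cone : ℕ → Set P
  | 0 => {p | ∀ q, ¬ p < q}
  | n + 1 => {p | ∀ q, p < q → q ∈ cone n}

/-- The n-th level: atoms (minimal elements) of the n-th cone. -/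
def level (n : ℕ) : Set P := {p | p ∈ cone P n ∧ ∀ q, q < p → q ∉ cone P n}

/-- An ω-poset: all levels finite and every element in some cone. -/
def IsOmegaPoset : Prop := (∀ n, (level P n).Finite) ∧ ∀ p : P, ∃ n, p ∈ cone P n

variable {P}

/-- `refines A C` : every element of `A` lies below some element of `C` (`A ≤ C`). -/
def refines (A C : Set P) : Prop := ∀ a ∈ A, ∃ c ∈ C, a ≤ c

/-- A cap is a subset refined by some level. -/
def IsCap (C : Set P) : Prop := ∃ n, refines (level P n) C

/-- A selector meets every cap. -/
def IsSelector (S : Set P) : Prop := ∀ C : Set P, IsCap C → (S ∩ C).Nonempty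

/-- `wedge p q` : `p` and `q` have a common lower bound. -/
def wedge (p q : P) : Prop := ∃ r, r ≤ p ∧ r ≤ q

def wedgeSet (p : P) : Set P := {q | wedge p q}

/-- The adjacency relation `p ⌅ q`. -/
def barwedge (p q : P) : Prop := ∀ C : Set P, IsCap C → ∃ c ∈ C, wedge p c ∧ wedge c q

/-- `p ⊲_C q`. -/
def starBelowOn (C : Set P) (p q : P) : Prop := ∀ c ∈ C, wedge p c → c ≤ q

/-- The star-below relation `p ⊲ q`. -/
def starBelow (p q : P) : Prop := ∃ n, starBelowOn (level P n) p q

/-- A clique: pairwise adjacent set. -/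
def IsClique (X : Set P) : Prop := ∀ p ∈ X, ∀ q ∈ X, barwedge p q

/-- Unbounded subset: meets `C^≥` for every cap `C`. -/
def IsUnbounded (X : Set P) : Prop := ∀ C : Set P, IsCap C → ∃ u ∈ X, ∃ c ∈ C, u ≤ c

variable (P)

/-- Regularity: every level is eventually star-refined by a later level. -/
def IsRegular : Prop :=
  ∀ m, ∃ n, m < n ∧ ∀ p ∈ level P n, ∃ q ∈ level P m, starBelow p q

/-- The spectrum: minimal selectors. -/
def Spec : Set (Set P) := {S | IsSelector S ∧ ∀ T ⊆ S, IsSelector T → T = S}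

def SpecT : Type _ := {S : Set P // S ∈ Spec P}

instance : TopologicalSpace (SpecT P) :=
  TopologicalSpace.generateFrom {U | ∃ p : P, U = {S : SpecT P | p ∈ S.1}}

/-- The clique-spectrum: unbounded maximal cliques. -/
def CliqueSpec : Set (Set P) :=
  {X | IsUnbounded X ∧ IsClique X ∧ ∀ Y : Set P, IsClique Y → X ⊆ Y → Y = X}

def CliqueSpecT : Type _ := {X : Set P // X ∈ CliqueSpec P}

instance : TopologicalSpace (CliqueSpecT P) :=
  TopologicalSpace.generateFrom {U | ∃ p : P, U = {X : CliqueSpecT P | p ∉ X.1}}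

variable {P}

/-- The basic open set `p_S`. -/
def pSOpen (p : P) : Set (SpecT P) := {S | p ∈ S.1}

/-- The closed set `p̄_S = {S : S ⊆ p^∧}`. -/
def pSBar (p : P) : Set (SpecT P) := {S | S.1 ⊆ wedgeSet p}

/-- Prime ω-poset: every basic open set is nonempty. -/
def IsPrimePoset (P : Type*) [PartialOrder P] : Prop := ∀ p : P, (pSOpen p).Nonempty

end OmegaPoset

end OP

/-!
If `p ⊲_{P_n} q`, a minimal selector `S ⊆ p^∧` meets the level `P_n` in some `c` compatible
with `p`, so `c ≤ q`, and minimal selectors are up-sets, whence `q ∈ S`. Conversely, if `p ⋪ q`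
then every level contains some `c ∈ p^∧` with `c ≰ q`; the up-set `p^∧ \ q^≥` therefore meets
every level, hence is a selector, and a minimal selector inside it (Zorn, using that every cap
has a finite subcap) lies in `p̄_S` but not in `q_S`.
-/

namespace OP

variable {P : Type*} [PartialOrder P]

lemma level_isCap (n : ℕ) : IsCap (level P n) :=
  ⟨n, fun a ha => ⟨a, ha, le_rfl⟩⟩

lemma isUpperSet_wedgeSet (p : P) : IsUpperSet (wedgeSet p) :=
  fun _ _ hyz ⟨r, hrp, hry⟩ => ⟨r, hrp, hry.trans hyz⟩

lemma IsSelector.of_isUpperSet {S : Set P} (hS : IsUpperSet S)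
    (hlevel : ∀ n, (S ∩ level P n).Nonempty) : IsSelector S := by
  rintro C ⟨n, hn⟩
  obtain ⟨a, haS, ha⟩ := hlevel n
  obtain ⟨c, hcC, hac⟩ := hn a ha
  exact ⟨c, hS hac haS, hcC⟩

lemma isUpperSet_of_mem_Spec {S : Set P} (hS : S ∈ Spec P) : IsUpperSet S := by
  intro c q hcq hc
  by_contra hq
  -- A cap missing `S \ {c}` stays a cap when `c` is replaced by `q`, and `S` misses that one.
  have hsel : IsSelector (S \ {c}) := by
    rintro C ⟨m, hm⟩
    have hcap : IsCap (insert q (C \ {c})) := by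
      refine ⟨m, fun a ha => ?_⟩
      obtain ⟨d, hdC, had⟩ := hm a ha
      by_cases hdc : d = c
      · exact ⟨q, Set.mem_insert q _, hdc ▸ had |>.trans hcq⟩
      · exact ⟨d, Set.mem_insert_of_mem q ⟨hdC, hdc⟩, had⟩
    obtain ⟨x, hxS, hx⟩ := hS.1 _ hcap
    rcases hx with rfl | ⟨hxC, hxc⟩
    · exact absurd hxS hq
    · exact ⟨x, ⟨hxS, hxc⟩, hxC⟩
  have hcS : c ∈ S \ {c} := (hS.2 _ Set.sdiff_subset hsel).symm ▸ hc
  exact hcS.2 rfl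

lemma IsCap.exists_finite_subset (hP : IsOmegaPoset P) {C : Set P} (hC : IsCap C) :
    ∃ C' ⊆ C, C'.Finite ∧ IsCap C' := by
  obtain ⟨n, hn⟩ := hC
  choose f hfC hf using hn
  refine ⟨{c | ∃ a ha, f a ha = c}, ?_, (hP.1 n).dependent_image f,
    n, fun a ha => ⟨f a ha, ⟨a, ha, rfl⟩, hf a ha⟩⟩
  rintro _ ⟨a, ha, rfl⟩
  exact hfC a ha

lemma _root_.IsChain.sInter_inter_nonempty {α : Type*} {C : Set α} (hC : C.Finite)
    {c : Set (Set α)} (hc : IsChain (· ⊆ ·) c) (hne : c.Nonempty)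
    (hmeet : ∀ T ∈ c, (T ∩ C).Nonempty) : (⋂₀ c ∩ C).Nonempty := by
  have hfin : ((· ∩ C) '' c).Finite :=
    hC.finite_subsets.subset (Set.image_subset_iff.2 fun _ _ => Set.inter_subset_right)
  obtain ⟨T₀, hT₀, hmin⟩ := Set.Finite.exists_minimalFor' (· ∩ C) c hfin hne
  have hT₀_le : ∀ T ∈ c, T₀ ∩ C ⊆ T := by
    intro T hT
    rcases eq_or_ne T T₀ with rfl | hne
    · exact Set.inter_subset_left
    rcases hc hT hT₀ hne with h | h
    · exact (hmin hT (Set.inter_subset_inter_left C h)).trans Set.inter_subset_left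
    · exact Set.inter_subset_left.trans h
  obtain ⟨x, hx⟩ := hmeet T₀ hT₀
  exact ⟨x, Set.mem_sInter.2 fun T hT => hT₀_le T hT hx, hx.2⟩

lemma IsSelector.sInter_of_isChain (hP : IsOmegaPoset P) {c : Set (Set P)}
    (hsel : ∀ T ∈ c, IsSelector T) (hc : IsChain (· ⊆ ·) c) (hne : c.Nonempty) :
    IsSelector (⋂₀ c) := by
  intro C hC
  obtain ⟨C', hC'C, hC'fin, hC'cap⟩ := hC.exists_finite_subset hP
  obtain ⟨x, hx, hxC'⟩ :=
    hc.sInter_inter_nonempty hC'fin hne fun T hT => hsel T hT C' hC'cap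
  exact ⟨x, hx, hC'C hxC'⟩

lemma IsSelector.exists_mem_Spec_subset (hP : IsOmegaPoset P) {S₀ : Set P}
    (hS₀ : IsSelector S₀) : ∃ S ∈ Spec P, S ⊆ S₀ := by
  obtain ⟨S, hSS₀, hmin⟩ := zorn_superset_nonempty {T : Set P | IsSelector T ∧ T ⊆ S₀}
    (fun c hcsub hc hne => ⟨⋂₀ c,
      ⟨IsSelector.sInter_of_isChain hP (fun T hT => (hcsub hT).1) hc hne,
        (Set.sInter_subset_of_mem hne.some_mem).trans (hcsub hne.some_mem).2⟩,
      fun _ => Set.sInter_subset_of_mem⟩) S₀ ⟨hS₀, subset_rfl⟩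
  exact ⟨S, ⟨hmin.prop.1, fun T hTS hT => hmin.eq_of_le ⟨hT, hTS.trans hSS₀⟩ hTS⟩, hSS₀⟩

lemma pSBar_subset_pSOpen_of_starBelow {p q : P} (h : starBelow p q) :
    pSBar p ⊆ pSOpen q := by
  rintro S hS
  obtain ⟨n, hn⟩ := h
  obtain ⟨c, hcS, hc⟩ := S.2.1 _ (level_isCap n)
  exact isUpperSet_of_mem_Spec S.2 (hn c hc (hS hcS)) hcS

lemma starBelow_of_pSBar_subset_pSOpen (hP : IsOmegaPoset P) {p q : P}
    (h : pSBar p ⊆ pSOpen q) : starBelow p q := by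
  by_contra hpq
  simp only [starBelow, starBelowOn, not_exists, not_forall, exists_prop] at hpq
  have hsel : IsSelector (wedgeSet p ∩ (Set.Iic q)ᶜ) :=
    IsSelector.of_isUpperSet ((isUpperSet_wedgeSet p).inter (isLowerSet_Iic q).compl)
      fun n => let ⟨c, hc, hpc, hcq⟩ := hpq n; ⟨c, ⟨hpc, hcq⟩, hc⟩
  obtain ⟨S, hS, hSsub⟩ := hsel.exists_mem_Spec_subset hP
  have hqS : q ∈ S := @h ⟨S, hS⟩ fun _ hy => (hSsub hy).1
  exact (hSsub hqS).2 le_rfl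

end OP

open OP in
/-- `p ⊲ q` iff `p̄_S ⊆ q_S`. -/
theorem stmt1 {P : Type*} [PartialOrder P] (hP : IsOmegaPoset P) (p q : P) :
    starBelow p q ↔ pSBar p ⊆ pSOpen q :=
  ⟨pSBar_subset_pSOpen_of_starBelow, starBelow_of_pSBar_subset_pSOpen hP⟩
end

section
/- For an ω-poset P, the following are equivalent: (1) P is predetermined, i.e. every non-atomic p ∈ P admits q with q^< = p^≤; (2) for every p ∈ P there is a minimal selector S containing p with S ⊆ p^≤ ∪ p^≥; (3) for every n ∈ ω, A ⊆ P_n and B ⊆ P^n, if ⋃_{a∈A} a_S ⊆ ⋃_{b∈B} b_S then A ≤ B (every element of A lies below some element of B). -/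
namespace OP

variable {P : Type*} [PartialOrder P]

theorem cone_subset_cone_succ (n : ℕ) : cone P n ⊆ cone P (n + 1) := by
  induction n with
  | zero => exact fun p hp q hq => absurd hq (hp q)
  | succ n ih => exact fun p hp q hq => ih (hp q hq)

theorem cone_mono : Monotone (cone P) := monotone_nat_of_le_succ cone_subset_cone_succ

theorem isAntichain_level (n : ℕ) : IsAntichain (· ≤ ·) (level P n) :=
  fun _ ha _ hb hne hab => hb.2 _ (lt_of_le_of_ne hab hne) ha.1

theorem mem_level_of_isMin {x : P} {n : ℕ} (hx : IsMin x) (hxn : x ∈ cone P n) :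
    x ∈ level P n :=
  ⟨hxn, fun _ hq _ => hx.not_lt hq⟩

theorem mem_cone_of_forall_lt_imp_lt {p x : P} {n : ℕ} (hp : p ∈ cone P n)
    (hx : ∀ y, x < y → p < y) : x ∈ cone P n := by
  cases n <;> exact fun y hxy => hp y (hx y hxy)

theorem exists_lt_mem_level_of_not_mem_cone {x : P} {k : ℕ} (hx : x ∈ cone P (k + 1))
    (hxk : x ∉ cone P k) : ∃ y, x < y ∧ y ∈ level P k := by
  cases k with
  | zero =>
    obtain ⟨y, hxy⟩ : ∃ y, x < y := by simpa [cone] using hxk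
    exact ⟨y, hxy, hx y hxy, fun z hzy hz => hz y hzy⟩
  | succ k =>
    obtain ⟨y, hxy, hyk⟩ : ∃ y, x < y ∧ y ∉ cone P k := by simpa [cone] using hxk
    exact ⟨y, hxy, hx y hxy, fun z hzy hz => hyk (hz y hzy)⟩

theorem refines.trans {A B C : Set P} (hAB : refines A B) (hBC : refines B C) :
    refines A C := fun a ha =>
  let ⟨b, hb, hab⟩ := hAB a ha
  let ⟨c, hc, hbc⟩ := hBC b hb
  ⟨c, hc, hab.trans hbc⟩

theorem refines_level_succ (k : ℕ) : refines (level P (k + 1)) (level P k) := by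
  intro a ha
  by_cases hak : a ∈ cone P k
  · exact ⟨a, ⟨hak, fun q hq hqk => ha.2 q hq (cone_subset_cone_succ k hqk)⟩, le_rfl⟩
  · obtain ⟨y, hay, hy⟩ := exists_lt_mem_level_of_not_mem_cone ha.1 hak
    exact ⟨y, hy, hay.le⟩

theorem refines_level_of_le {m n : ℕ} (h : n ≤ m) : refines (level P m) (level P n) := by
  induction m, h using Nat.le_induction with
  | base => exact fun a ha => ⟨a, ha, le_rfl⟩
  | succ m _ ih => exact (refines_level_succ m).trans ih

section Depth

/-- The least `n` with `x ∈ cone P n`; `0` if `x` lies in no cone. -/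
noncomputable def depth (x : P) : ℕ := sInf {n | x ∈ cone P n}

theorem depth_le {x : P} {n : ℕ} (h : x ∈ cone P n) : depth x ≤ n := Nat.sInf_le h

theorem mem_cone_depth {x : P} (hx : ∃ n, x ∈ cone P n) : x ∈ cone P (depth x) :=
  Nat.sInf_mem hx

theorem depth_lt_depth {x y : P} (hx : ∃ n, x ∈ cone P n) (hxy : x < y) :
    depth y < depth x := by
  have hmem := mem_cone_depth hx
  cases h : depth x with
  | zero => rw [h] at hmem; exact absurd hxy (hmem y)
  | succ n => rw [h] at hmem; exact Nat.lt_succ_of_le (depth_le (hmem y hxy))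

theorem mem_level_depth {x : P} (hx : ∃ n, x ∈ cone P n) : x ∈ level P (depth x) :=
  ⟨mem_cone_depth hx, fun _ hq hqc => (depth_lt_depth ⟨_, hqc⟩ hq).not_ge (depth_le hqc)⟩

theorem exists_mem_level_le_of_le_depth {x : P} (hx : ∃ n, x ∈ cone P n) {n : ℕ}
    (hn : n ≤ depth x) : ∃ c ∈ level P n, x ≤ c :=
  refines_level_of_le hn x (mem_level_depth hx)

theorem exists_mem_level_le_of_isMin {x : P} (hx : ∃ n, x ∈ cone P n) (hmin : IsMin x)
    (n : ℕ) : ∃ c ∈ level P n, x ≤ c := by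
  rcases le_total n (depth x) with hn | hn
  · exact exists_mem_level_le_of_le_depth hx hn
  · exact ⟨x, mem_level_of_isMin hmin (cone_mono hn (mem_cone_depth hx)), le_rfl⟩

theorem le_depth_of_strictAnti (hcone : ∀ x : P, ∃ n, x ∈ cone P n) {f : ℕ → P}
    (hf : StrictAnti f) (k : ℕ) : k ≤ depth (f k) :=
  StrictMono.id_le (fun _ _ hij => depth_lt_depth (hcone _) (hf hij)) k

end Depth

section Selectors

theorem isSelector_iff {S : Set P} : IsSelector S ↔ ∀ n, ∃ a ∈ level P n, Set.Ici a ⊆ S := by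
  constructor
  · intro h n
    by_contra! hno
    have hcap : IsCap {c | c ∉ S} := ⟨n, fun a ha =>
      let ⟨c, hac, hcS⟩ := Set.not_subset.mp (hno a ha)
      ⟨c, hcS, hac⟩⟩
    obtain ⟨c, hcS, hc⟩ := h _ hcap
    exact hc hcS
  · rintro h C ⟨n, hC⟩
    obtain ⟨a, ha, haS⟩ := h n
    obtain ⟨c, hcC, hac⟩ := hC a ha
    exact ⟨c, haS hac, hcC⟩

theorem isSelector_sInter_of_isChain (hfin : ∀ n, (level P n).Finite) {c : Set (Set P)}
    (hsel : ∀ T ∈ c, IsSelector T) (hchain : IsChain (· ⊆ ·) c) (hne : c.Nonempty) :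
    IsSelector (⋂₀ c) := by
  refine isSelector_iff.mpr fun n => ?_
  by_contra! hbad
  have : ∀ a ∈ level P n, ∃ T ∈ c, ¬ Set.Ici a ⊆ T := fun a ha => by
    simpa [Set.subset_sInter_iff] using hbad a ha
  choose! T hTc hT using this
  obtain ⟨T₀, hT₀⟩ := hne
  obtain ⟨a, ha, -⟩ := isSelector_iff.mp (hsel T₀ hT₀) n
  -- the smallest of the finitely many `T a` still has a witness `b` on level `n`, refuting `T b`
  obtain ⟨a₀, ha₀, hmin⟩ :=
    Set.Finite.exists_minimalFor' T (level P n) ((hfin n).image T) ⟨a, ha⟩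
  obtain ⟨b, hb, hbT⟩ := isSelector_iff.mp (hsel _ (hTc a₀ ha₀)) n
  exact hT b hb (hbT.trans ((hchain.total (hTc a₀ ha₀) (hTc b hb)).elim id (hmin hb)))

theorem exists_mem_spec_subset (hfin : ∀ n, (level P n).Finite) {S : Set P}
    (hS : IsSelector S) : ∃ T ∈ Spec P, T ⊆ S := by
  obtain ⟨T, hTS, hT⟩ := zorn_superset_nonempty {T | IsSelector T ∧ T ⊆ S}
    (fun c hc hchain hne => ⟨⋂₀ c,
      ⟨isSelector_sInter_of_isChain hfin (fun T hT => (hc hT).1) hchain hne,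
        (Set.sInter_subset_of_mem hne.some_mem).trans (hc hne.some_mem).2⟩,
      fun _ hT => Set.sInter_subset_of_mem hT⟩) S ⟨hS, subset_rfl⟩
  exact ⟨T, ⟨hT.prop.1, fun T' hT' hsel =>
    subset_antisymm hT' (hT.2 ⟨hsel, hT'.trans hTS⟩ hT')⟩, hTS⟩

variable {S : Set P}

theorem isUpperSet_of_mem_spec (hS : S ∈ Spec P) : IsUpperSet S := by
  have hsel : IsSelector {s ∈ S | Set.Ici s ⊆ S} := isSelector_iff.mpr fun n => by
    obtain ⟨a, ha, haS⟩ := isSelector_iff.mp hS.1 n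
    exact ⟨a, ha, fun c hac => ⟨haS hac, (Set.Ici_subset_Ici.mpr hac).trans haS⟩⟩
  have heq := hS.2 _ (Set.sep_subset _ _) hsel
  exact fun a b hab ha => (heq.ge ha).2 hab

theorem exists_le_of_mem_spec (hS : S ∈ Spec P) {s : P} (hs : s ∈ S) :
    ∃ m, ∀ n, m ≤ n → ∀ a ∈ level P n, a ∈ S → a ≤ s := by
  have hnot : ¬ IsSelector (S \ {s}) := fun h => ((hS.2 _ Set.sdiff_subset h).ge hs).2 rfl
  obtain ⟨m, hm⟩ : ∃ m, ∀ a ∈ level P m, ∃ c, a ≤ c ∧ c ∉ S \ {s} := by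
    simpa [isSelector_iff, Set.not_subset] using hnot
  refine ⟨m, fun n hmn a ha haS => ?_⟩
  obtain ⟨b, hb, hab⟩ := refines_level_of_le hmn a ha
  obtain ⟨c, hbc, hc⟩ := hm b hb
  have hcs : c = s := by
    by_contra hne
    exact hc ⟨isUpperSet_of_mem_spec hS (hab.trans hbc) haS, hne⟩
  exact hcs ▸ hab.trans hbc

theorem exists_mem_lt_of_mem_spec (hcone : ∀ x : P, ∃ n, x ∈ cone P n) (hS : S ∈ Spec P)
    {p : P} (hp : p ∈ S) (hmin : ¬ IsMin p) : ∃ a ∈ S, a < p := by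
  obtain ⟨r, hrp⟩ := not_isMin_iff.mp hmin
  obtain ⟨m, hm⟩ := exists_le_of_mem_spec hS hp
  obtain ⟨a, ha, haS⟩ := isSelector_iff.mp hS.1 (max m (depth r))
  refine ⟨a, haS le_rfl, lt_of_le_of_ne (hm _ (le_max_left _ _) a ha (haS le_rfl)) ?_⟩
  rintro rfl
  exact ha.2 r hrp (cone_mono (le_max_right _ _) (mem_cone_depth (hcone r)))

theorem mem_of_mem_spec_of_comparable (hS : S ∈ Spec P) {p : P} (hp : ∃ n, p ∈ cone P n)
    (hcomp : ∀ r ∈ S, p ≤ r ∨ r ≤ p) : p ∈ S := by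
  obtain ⟨a, ha, haS⟩ := isSelector_iff.mp hS.1 (depth p)
  have hap : a = p := by
    rcases hcomp a (haS le_rfl) with h | h
    · exact ((isAntichain_level _).eq (mem_level_depth hp) ha h).symm
    · exact (isAntichain_level _).eq ha (mem_level_depth hp) h
  exact hap ▸ haS le_rfl

end Selectors

section Predetermined

variable (P) in
def IsPredetermined : Prop := ∀ p : P, (∃ r, r < p) → ∃ q : P, ∀ r, (q < r ↔ p ≤ r)

theorem IsPredetermined.exists_pred (h : IsPredetermined P) (x : P) :
    ∃ q, q ≤ x ∧ (∀ r, q < r → x ≤ r) ∧ (¬ IsMin x → q < x) := by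
  by_cases hx : IsMin x
  · exact ⟨x, le_rfl, fun _ hr => hr.le, fun h => absurd hx h⟩
  · obtain ⟨q, hq⟩ := h x (not_isMin_iff.mp hx)
    have hqx : q < x := (hq x).mpr le_rfl
    exact ⟨q, hqx.le, fun r => (hq r).mp, fun _ => hqx⟩

theorem isSelector_setOf_exists_le (hcone : ∀ x : P, ∃ n, x ∈ cone P n) {f : ℕ → P}
    (hf : ∀ k, f (k + 1) < f k ∨ IsMin (f k)) : IsSelector {r | ∃ k, f k ≤ r} := by
  refine isSelector_iff.mpr fun n => ?_
  obtain ⟨k, c, hc, hkc⟩ : ∃ k, ∃ c ∈ level P n, f k ≤ c := by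
    obtain ⟨k, hk⟩ | hmin := em (∃ k, IsMin (f k))
    · exact ⟨k, exists_mem_level_le_of_isMin (hcone _) hk n⟩
    · have hanti : StrictAnti f :=
        strictAnti_nat_of_succ_lt fun k => (hf k).resolve_right (not_exists.mp hmin k)
      exact ⟨n, exists_mem_level_le_of_le_depth (hcone _) (le_depth_of_strictAnti hcone hanti n)⟩
  exact ⟨c, hc, fun r hcr => ⟨k, hkc.trans hcr⟩⟩

theorem le_or_le_of_iterate_le {g : P → P} (hg_le : ∀ x, g x ≤ x)
    (hg_lt : ∀ x r, g x < r → x ≤ r) (p : P) (k : ℕ) {r : P} (hk : g^[k] p ≤ r) :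
    p ≤ r ∨ r ≤ p := by
  have hle : ∀ j, g^[j] p ≤ p := fun j => by
    induction j with
    | zero => exact le_rfl
    | succ j ih => exact (Function.iterate_succ_apply' g j p ▸ hg_le _).trans ih
  induction k generalizing r with
  | zero => exact Or.inl hk
  | succ k ih =>
    rw [Function.iterate_succ_apply'] at hk
    rcases hk.eq_or_lt with rfl | hlt
    · exact Or.inr ((hg_le _).trans (hle k))
    · exact ih (hg_lt _ r hlt)

theorem IsPredetermined.exists_spec_comparable (hP : IsOmegaPoset P) (h : IsPredetermined P)
    (p : P) : ∃ S : SpecT P, p ∈ S.1 ∧ S.1 ⊆ {r | p ≤ r ∨ r ≤ p} := by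
  choose g hg_le hg_lt hg_min using h.exists_pred
  have hsel : IsSelector {r | ∃ k, g^[k] p ≤ r} := isSelector_setOf_exists_le hP.2 fun k => by
    rw [Function.iterate_succ_apply']
    exact (em (IsMin (g^[k] p))).symm.imp_left (hg_min _)
  obtain ⟨T, hT, hTS⟩ := exists_mem_spec_subset hP.1 hsel
  have hcomp : ∀ r ∈ T, p ≤ r ∨ r ≤ p := fun r hr =>
    let ⟨k, hk⟩ := hTS hr
    le_or_le_of_iterate_le hg_le hg_lt p k hk
  exact ⟨⟨T, hT⟩, mem_of_mem_spec_of_comparable hT (hP.2 p) hcomp, hcomp⟩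

theorem refines_of_exists_spec_comparable
    (h : ∀ p : P, ∃ S : SpecT P, p ∈ S.1 ∧ S.1 ⊆ {r | p ≤ r ∨ r ≤ p}) {n : ℕ} {A B : Set P}
    (hA : A ⊆ level P n) (hB : B ⊆ cone P n)
    (hAB : (⋃ a ∈ A, pSOpen a) ⊆ ⋃ b ∈ B, pSOpen b) : refines A B := by
  intro a ha
  obtain ⟨S, haS, hScomp⟩ := h a
  obtain ⟨b, hb, hbS⟩ := Set.mem_iUnion₂.mp (hAB (Set.mem_biUnion ha haS))
  rcases hScomp hbS with hab | hba
  · exact ⟨b, hb, hab⟩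
  · exact ⟨b, hb, (eq_of_le_of_not_lt hba fun hlt => (hA ha).2 b hlt (hB hb)).ge⟩

/-- Climbing from `a` as long as possible outside `p^≤` ends at an element whose strict upper
bounds are all above `p`; it cannot lie below `p`, where it would predetermine `p`. -/
theorem exists_le_forall_lt_imp_lt (hcone : ∀ x : P, ∃ n, x ∈ cone P n) {p a : P}
    (hno : ¬ ∃ q, ∀ r, q < r ↔ p ≤ r) (hap : a < p) :
    ∃ x, a ≤ x ∧ ¬ p ≤ x ∧ ∀ y, x < y → p < y := by
  obtain ⟨x, ⟨hax, hpx⟩, hmax⟩ :=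
    (measure depth).wf.has_min {y | a ≤ y ∧ ¬ p ≤ y} ⟨a, le_rfl, hap.not_ge⟩
  have hup : ∀ y, x < y → p ≤ y := fun y hxy => by_contra fun hpy =>
    hmax y ⟨hax.trans hxy.le, hpy⟩ (depth_lt_depth (hcone x) hxy)
  have hxp : ¬ x < p := fun hxp => hno ⟨x, fun r => ⟨hup r, hxp.trans_le⟩⟩
  exact ⟨x, hax, hpx, fun y hxy => (hup y hxy).lt_of_ne (by rintro rfl; exact hxp hxy)⟩

theorem isPredetermined_of_refines (hP : IsOmegaPoset P)
    (h : ∀ (n : ℕ) (A B : Set P), A ⊆ level P n → B ⊆ cone P n →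
      (⋃ a ∈ A, pSOpen a) ⊆ (⋃ b ∈ B, pSOpen b) → refines A B) :
    IsPredetermined P := by
  intro p hp
  by_contra hno
  have hpn := mem_level_depth (hP.2 p)
  have hcover : (⋃ a ∈ ({p} : Set P), pSOpen a) ⊆
      ⋃ b ∈ {b | b ∈ cone P (depth p) ∧ ¬ p ≤ b}, pSOpen b := by
    intro S hS
    simp only [Set.mem_singleton_iff, Set.iUnion_iUnion_eq_left] at hS
    obtain ⟨a, haS, hap⟩ := exists_mem_lt_of_mem_spec hP.2 S.2 hS (not_isMin_iff.mpr hp)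
    obtain ⟨x, hax, hpx, hx⟩ := exists_le_forall_lt_imp_lt hP.2 hno hap
    exact Set.mem_iUnion₂.mpr
      ⟨x, ⟨mem_cone_of_forall_lt_imp_lt hpn.1 hx, hpx⟩, isUpperSet_of_mem_spec S.2 hax haS⟩
  obtain ⟨b, hb, hpb⟩ :=
    h _ {p} _ (Set.singleton_subset_iff.mpr hpn) (fun _ hb => hb.1) hcover p rfl
  exact hb.2 hpb

end Predetermined

end OP

open OP in
/-- Characterisations of predetermined ω-posets. -/
theorem stmt2 {P : Type*} [PartialOrder P] (hP : IsOmegaPoset P) :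
    List.TFAE [
      -- (1) P is predetermined: every non-atomic p admits q with q^< = p^≤
      ∀ p : P, (∃ r, r < p) → ∃ q : P, ∀ r, (q < r ↔ p ≤ r),
      -- (2) every p lies in a minimal selector consisting of elements comparable with p
      ∀ p : P, ∃ S : SpecT P, p ∈ S.1 ∧ S.1 ⊆ {r | p ≤ r ∨ r ≤ p},
      -- (3) inclusions of unions of basic opens indexed by a level imply refinement
      ∀ (n : ℕ) (A B : Set P), A ⊆ level P n → B ⊆ cone P n →
        (⋃ a ∈ A, pSOpen a) ⊆ (⋃ b ∈ B, pSOpen b) → refines A B ] := by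
  tfae_have 1 → 2 := IsPredetermined.exists_spec_comparable hP
  tfae_have 2 → 3 := fun h _ _ _ => refines_of_exists_spec_comparable h
  tfae_have 3 → 1 := isPredetermined_of_refines hP
  tfae_finish
end
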